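/- Variational form of the η-quasi-norm: for η ∈ (0,2) and any nonnegative reals a_1,…,a_m not all zero, setting β = η/(2−η), one has ||a||_η = min over z ∈ R^m_{>0} of (1/2)(∑_i a_i^2 / z_i + ||z||_β), and the minimum is attained at z_i = a_i^{2−η} ||a||_η^{η−1}. -/

import Mathlib

/-!
Hölder's inequality with exponents `2 / η` and `2 / (2 - η)`, applied to the factorization
`a ^ η = (a ^ 2 / z) ^ (η / 2) * z ^ (η / 2)`, gives `‖a‖_η ^ 2 ≤ (∑ a ^ 2 / z) * ‖z‖_β`, and
AM–GM turns this into `‖a‖_η ≤ (∑ a ^ 2 / z + ‖z‖_β) / 2`. At `z = a ^ (2 - η) * ‖a‖_η ^ (η - 1)`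
both summands equal `‖a‖_η`, so the bound is attained.
-/

open Real Finset

section LpQuasinorm

variable {ι : Type*} [Fintype ι]

noncomputable def lpQuasinorm (p : ℝ) (x : ι → ℝ) : ℝ :=
  (∑ i, x i ^ p) ^ (1 / p)

variable {p : ℝ} {x : ι → ℝ}

lemma lpQuasinorm_nonneg (hx : ∀ i, 0 ≤ x i) : 0 ≤ lpQuasinorm p x :=
  rpow_nonneg (sum_nonneg fun i _ => rpow_nonneg (hx i) p) _

lemma lpQuasinorm_pos (hx : ∀ i, 0 ≤ x i) (hx0 : x ≠ 0) : 0 < lpQuasinorm p x := by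
  obtain ⟨j, hj⟩ : ∃ j, x j ≠ 0 := Function.ne_iff.mp hx0
  have hsum : 0 < ∑ i, x i ^ p :=
    sum_pos' (fun i _ => rpow_nonneg (hx i) p)
      ⟨j, mem_univ j, rpow_pos_of_pos (lt_of_le_of_ne (hx j) hj.symm) p⟩
  exact rpow_pos_of_pos hsum _

lemma lpQuasinorm_rpow_self (hp : p ≠ 0) (hx : ∀ i, 0 ≤ x i) :
    lpQuasinorm p x ^ p = ∑ i, x i ^ p := by
  rw [lpQuasinorm, ← rpow_mul (sum_nonneg fun i _ => rpow_nonneg (hx i) p),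
    one_div_mul_cancel hp, rpow_one]

lemma lpQuasinorm_one (x : ι → ℝ) : lpQuasinorm 1 x = ∑ i, x i := by
  simp [lpQuasinorm]

lemma lpQuasinorm_comp_rpow {r : ℝ} (hr : r ≠ 0) (hx : ∀ i, 0 ≤ x i) :
    lpQuasinorm p (fun i => x i ^ r) = lpQuasinorm (r * p) x ^ r := by
  have hsum : 0 ≤ ∑ i, x i ^ (r * p) := sum_nonneg fun i _ => rpow_nonneg (hx i) _
  simp only [lpQuasinorm, ← rpow_mul (hx _), ← rpow_mul hsum]
  congr 1
  rcases eq_or_ne p 0 with rfl | hp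
  · simp
  · field_simp

lemma lpQuasinorm_const_mul {c : ℝ} (hc : 0 ≤ c) (hp : p ≠ 0) (hx : ∀ i, 0 ≤ x i) :
    lpQuasinorm p (fun i => c * x i) = c * lpQuasinorm p x := by
  have hsum : 0 ≤ ∑ i, x i ^ p := sum_nonneg fun i _ => rpow_nonneg (hx i) p
  simp only [lpQuasinorm, mul_rpow hc (hx _), ← mul_sum, mul_rpow (rpow_nonneg hc p) hsum,
    ← rpow_mul hc, mul_one_div_cancel hp, rpow_one]

end LpQuasinorm

lemma sq_div_rpow_two_sub {η x : ℝ} (hη : η ≠ 0) (hx : 0 ≤ x) :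
    x ^ 2 / x ^ (2 - η) = x ^ η := by
  rcases hx.eq_or_lt with rfl | hx
  · simp [zero_rpow hη]
  · rw [← rpow_natCast, ← rpow_sub hx]
    norm_num

lemma le_add_div_two_of_sq_le_mul {x a b : ℝ} (hab : 0 ≤ a + b) (h : x ^ 2 ≤ a * b) :
    x ≤ (a + b) / 2 := by
  nlinarith [sq_nonneg (a - b)]

section Variational

variable {ι : Type*} [Fintype ι] {η : ℝ} {a : ι → ℝ}

lemma sum_sq_div_optimal (hη : η ≠ 0) (ha : ∀ i, 0 ≤ a i) (ha0 : a ≠ 0) :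
    ∑ i, a i ^ 2 / (a i ^ (2 - η) * lpQuasinorm η a ^ (η - 1)) = lpQuasinorm η a := by
  have hN := lpQuasinorm_pos (p := η) ha ha0
  simp only [← div_div, sq_div_rpow_two_sub hη (ha _), ← sum_div,
    ← lpQuasinorm_rpow_self hη ha, ← rpow_sub hN]
  norm_num

lemma lpQuasinorm_optimal (hη0 : η ≠ 0) (hη2 : η ≠ 2) (ha : ∀ i, 0 ≤ a i) (ha0 : a ≠ 0) :
    lpQuasinorm (η / (2 - η)) (fun i => a i ^ (2 - η) * lpQuasinorm η a ^ (η - 1)) =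
      lpQuasinorm η a := by
  have hN := lpQuasinorm_pos (p := η) ha ha0
  have h2η : 2 - η ≠ 0 := sub_ne_zero.mpr hη2.symm
  simp only [mul_comm _ (lpQuasinorm η a ^ (η - 1))]
  rw [lpQuasinorm_const_mul (rpow_nonneg hN.le _) (div_ne_zero hη0 h2η)
      fun i => rpow_nonneg (ha i) _,
    lpQuasinorm_comp_rpow h2η ha, mul_div_cancel₀ η h2η, ← rpow_add hN]
  norm_num

lemma sum_rpow_le_rpow_sum_sq_div_mul (hη0 : 0 < η) (hη2 : η < 2) (ha : ∀ i, 0 ≤ a i)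
    {z : ι → ℝ} (hz : ∀ i, 0 < z i) :
    ∑ i, a i ^ η ≤ ((∑ i, a i ^ 2 / z i) * lpQuasinorm (η / (2 - η)) z) ^ (η / 2) := by
  have hw : ∀ i, 0 ≤ a i ^ 2 / z i := fun i => div_nonneg (sq_nonneg _) (hz i).le
  have hpq : (2 / η).HolderConjugate (2 / (2 - η)) :=
    ⟨by rw [inv_div, inv_div, inv_one]; ring, div_pos two_pos hη0, div_pos two_pos (by linarith)⟩
  have hprod : ∀ i, (a i ^ 2 / z i) ^ (η / 2) * z i ^ (η / 2) = a i ^ η := by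
    intro i
    rw [← mul_rpow (hw i) (hz i).le, div_mul_cancel₀ _ (hz i).ne', ← rpow_natCast,
      ← rpow_mul (ha i)]
    ring_nf
  have holder : ∑ i, a i ^ η ≤ lpQuasinorm (2 / η) (fun i => (a i ^ 2 / z i) ^ (η / 2)) *
      lpQuasinorm (2 / (2 - η)) (fun i => z i ^ (η / 2)) := by
    simpa only [hprod, lpQuasinorm] using inner_le_Lp_mul_Lq_of_nonneg univ hpq
      (fun i _ => rpow_nonneg (hw i) (η / 2)) (fun i _ => rpow_nonneg (hz i).le (η / 2))
  have hη2' : η / 2 ≠ 0 := by positivity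
  rwa [lpQuasinorm_comp_rpow hη2' hw, lpQuasinorm_comp_rpow hη2' fun i => (hz i).le,
    show η / 2 * (2 / η) = 1 by field_simp, show η / 2 * (2 / (2 - η)) = η / (2 - η) by ring,
    lpQuasinorm_one, ← mul_rpow (sum_nonneg fun i _ => hw i)
      (lpQuasinorm_nonneg fun i => (hz i).le)] at holder

lemma lpQuasinorm_sq_le_sum_sq_div_mul (hη0 : 0 < η) (hη2 : η < 2) (ha : ∀ i, 0 ≤ a i)
    {z : ι → ℝ} (hz : ∀ i, 0 < z i) :
    lpQuasinorm η a ^ 2 ≤ (∑ i, a i ^ 2 / z i) * lpQuasinorm (η / (2 - η)) z := by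
  have hN := lpQuasinorm_nonneg (p := η) ha
  have hAB : 0 ≤ (∑ i, a i ^ 2 / z i) * lpQuasinorm (η / (2 - η)) z :=
    mul_nonneg (sum_nonneg fun i _ => div_nonneg (sq_nonneg _) (hz i).le)
      (lpQuasinorm_nonneg fun i => (hz i).le)
  have hpow : (lpQuasinorm η a ^ 2) ^ (η / 2) = ∑ i, a i ^ η := by
    rw [← lpQuasinorm_rpow_self hη0.ne' ha, ← rpow_natCast, ← rpow_mul hN]
    ring_nf
  rw [← rpow_le_rpow_iff (by positivity) hAB (by positivity : 0 < η / 2), hpow]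
  exact sum_rpow_le_rpow_sum_sq_div_mul hη0 hη2 ha hz

end Variational

theorem eta_quasinorm_variational_form
    (m : ℕ) (η : ℝ) (hη : η ∈ Set.Ioo (0 : ℝ) 2)
    (a : Fin m → ℝ) (ha : ∀ i, 0 ≤ a i) (ha0 : a ≠ 0) :
    (fun z : Fin m → ℝ =>
        (1 / 2) * (∑ i, (a i) ^ 2 / z i + (∑ i, z i ^ (η / (2 - η))) ^ ((2 - η) / η)))
      (fun i => a i ^ (2 - η) * ((∑ i, a i ^ η) ^ (1 / η)) ^ (η - 1)) =
      (∑ i, a i ^ η) ^ (1 / η) ∧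
    ∀ z : Fin m → ℝ, (∀ i, 0 < z i) →
      (∑ i, a i ^ η) ^ (1 / η) ≤
        (1 / 2) * (∑ i, (a i) ^ 2 / z i + (∑ i, z i ^ (η / (2 - η))) ^ ((2 - η) / η)) := by
  obtain ⟨hη0, hη2⟩ := hη
  have hβ (z : Fin m → ℝ) :
      (∑ i, z i ^ (η / (2 - η))) ^ ((2 - η) / η) = lpQuasinorm (η / (2 - η)) z := by
    rw [lpQuasinorm, one_div_div]
  have hα : (∑ i, a i ^ η) ^ (1 / η) = lpQuasinorm η a := rfl
  simp only [hα, hβ]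
  refine ⟨?_, fun z hz => ?_⟩
  · rw [sum_sq_div_optimal hη0.ne' ha ha0, lpQuasinorm_optimal hη0.ne' hη2.ne ha ha0]
    ring
  · have hA : 0 ≤ ∑ i, a i ^ 2 / z i := sum_nonneg fun i _ => div_nonneg (sq_nonneg _) (hz i).le
    have hB := lpQuasinorm_nonneg (p := η / (2 - η)) fun i => (hz i).le
    linarith [le_add_div_two_of_sq_le_mul (add_nonneg hA hB)
      (lpQuasinorm_sq_le_sum_sq_div_mul hη0 hη2 ha hz)]
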